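/- arXiv:2005.03576 — 3 statements merged into one kernel-verified Lean document; each statement's English description precedes it below -/
import Mathlib

section
/- In the setting of the deterministic-patience likelihood: for $\theta \ge 0$ define $L(\theta) = \lambda^n \prod_{i=1}^n \mathbf{1}\{W_i \le \theta\} \left( \mathbf{1}\{W_{i-1}+X_{i-1} \le \theta\} e^{-\lambda A_i} + \mathbf{1}\{W_{i-1}+X_{i-1} > \theta\} e^{-\lambda(A_i + \theta - W_{i-1} - X_{i-1})} \right)$, where $W_i = \max\{W_{i-1}+X_{i-1} - A_i, 0\}$, all quantities nonnegative, $\lambda > 0$, and $A_i \ge \max\{W_{i-1}+X_{i-1}-\theta, 0\}$ whenever $W_{i-1}+X_{i-1}>\theta$ (consistency of observations). Then: (i) $L(\theta) = 0$ for $\theta < \max_{1 \le i \le n} W_i$; (ii) $L$ is non-increasing on $[\max_i W_i, \infty)$; hence $\theta = \max_{1 \le i \le n} W_i$ is a maximizer of $L$ over $[0, \infty)$. -/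
open Real Finset

/-- The deterministic-patience likelihood `L` vanishes below
`max_i W i`, is non-increasing on `[max_i W i, ∞)`, and hence is maximized over
`[0,∞)` at `θ = max_{1≤i≤n} W i`. -/
theorem stmt12 (n : ℕ) (hn : 1 ≤ n) (lam : ℝ) (hlam : 0 < lam)
    (W X A : ℕ → ℝ)
    (hW0 : 0 ≤ W 0) (hX : ∀ i, 0 ≤ X i) (hA : ∀ i, 0 ≤ A i)
    (hrec : ∀ i, 1 ≤ i → i ≤ n → W i = max (W (i - 1) + X (i - 1) - A i) 0)
    (θ₀ : ℝ)
    (hconsist : ∀ i, 1 ≤ i → i ≤ n → θ₀ < W (i - 1) + X (i - 1) →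
      max (W (i - 1) + X (i - 1) - θ₀) 0 ≤ A i)
    (L : ℝ → ℝ)
    (hL : ∀ θ : ℝ, L θ = lam ^ n *
      ∏ i ∈ Finset.Icc 1 n,
        (if W i ≤ θ then (1 : ℝ) else 0) *
          ((if W (i - 1) + X (i - 1) ≤ θ then exp (-lam * A i) else 0) +
           (if θ < W (i - 1) + X (i - 1) then
              exp (-lam * (A i + θ - W (i - 1) - X (i - 1))) else 0))) :
    (∀ θ : ℝ, 0 ≤ θ →
        θ < (Finset.Icc 1 n).sup' (Finset.nonempty_Icc.mpr hn) W → L θ = 0) ∧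
    (∀ θ₁ θ₂ : ℝ,
        (Finset.Icc 1 n).sup' (Finset.nonempty_Icc.mpr hn) W ≤ θ₁ → θ₁ ≤ θ₂ →
        L θ₂ ≤ L θ₁) ∧
    (∀ θ : ℝ, 0 ≤ θ →
        L θ ≤ L ((Finset.Icc 1 n).sup' (Finset.nonempty_Icc.mpr hn) W)) := by
  set M := (Finset.Icc 1 n).sup' (Finset.nonempty_Icc.mpr hn) W with hM
  -- nonnegativity of each factor
  have hterm_nonneg : ∀ (θ : ℝ) (i : ℕ),
      0 ≤ (if W i ≤ θ then (1 : ℝ) else 0) *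
          ((if W (i - 1) + X (i - 1) ≤ θ then exp (-lam * A i) else 0) +
           (if θ < W (i - 1) + X (i - 1) then
              exp (-lam * (A i + θ - W (i - 1) - X (i - 1))) else 0)) := by
    intro θ i
    apply mul_nonneg
    · split <;> norm_num
    · apply add_nonneg <;> · split <;> first | exact (exp_pos _).le | norm_num
  have hLnonneg : ∀ θ : ℝ, 0 ≤ L θ := by
    intro θ
    rw [hL θ]
    exact mul_nonneg (pow_nonneg hlam.le n) (Finset.prod_nonneg fun i _ => hterm_nonneg θ i)
  -- part (i)
  have part1 : ∀ θ : ℝ, 0 ≤ θ → θ < M → L θ = 0 := by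
    intro θ _ hθ
    obtain ⟨i, hi, hWi⟩ := (Finset.lt_sup'_iff _).mp hθ
    rw [hL θ]
    rw [Finset.prod_eq_zero hi, mul_zero]
    rw [if_neg (not_le.mpr hWi), zero_mul]
  -- part (ii)
  have part2 : ∀ θ₁ θ₂ : ℝ, M ≤ θ₁ → θ₁ ≤ θ₂ → L θ₂ ≤ L θ₁ := by
    intro θ₁ θ₂ h1 h12
    rw [hL θ₁, hL θ₂]
    apply mul_le_mul_of_nonneg_left _ (pow_nonneg hlam.le n)
    apply Finset.prod_le_prod (fun i _ => hterm_nonneg θ₂ i)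
    intro i hi
    have hW1 : W i ≤ θ₁ := le_trans (Finset.le_sup' W hi) h1
    have hW2 : W i ≤ θ₂ := hW1.trans h12
    rw [if_pos hW1, if_pos hW2, one_mul, one_mul]
    by_cases hc1 : W (i - 1) + X (i - 1) ≤ θ₁
    · rw [if_pos hc1, if_pos (hc1.trans h12), if_neg (not_lt.mpr hc1),
        if_neg (not_lt.mpr (hc1.trans h12))]
    · rw [if_neg hc1, if_pos (not_le.mp hc1), zero_add]
      by_cases hc2 : W (i - 1) + X (i - 1) ≤ θ₂
      · rw [if_pos hc2, if_neg (not_lt.mpr hc2), add_zero]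
        apply exp_le_exp.mpr
        have h := not_le.mp hc1
        nlinarith
      · rw [if_neg hc2, if_pos (not_le.mp hc2), zero_add]
        apply exp_le_exp.mpr
        nlinarith
  refine ⟨part1, part2, fun θ hθ => ?_⟩
  rcases lt_or_ge θ M with h | h
  · rw [part1 θ hθ h]; exact hLnonneg _
  · exact part2 M θ le_rfl h
end

section
/- Suppose $\overline H_{\theta_0}: [0,\infty) \to (0,1]$ and $\overline H_{\inf}: [0,\infty) \to (0,1]$ are non-increasing, $f: [0,\infty) \to (0,\infty)$ is non-decreasing, and there exist $c_1, c_2 \in [0,\infty)$ and $y^* > 0$ with $e^{-f(y)}/\overline H_{\inf}(y) < c_1 + 1$ and $0 < f(y)\overline H_{\theta_0}(y) < c_2 + 1$ for all $y \ge y^*$. Let $v: [0,\infty) \to [0,\infty)$ be measurable with $\int_0^\infty v(y)\,dy \le 1$. Then $\int_0^\infty (-\log \overline H_{\inf}(y)) \overline H_{\theta_0}(y) v(y)\,dy \le -\log(\overline H_{\inf}(y^*)) + (c_2+1)\left(1 + \frac{|\log(c_1+1)|}{f(y^*)}\right) < \infty$. -/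
open MeasureTheory Real

/-- The core integrability estimate for the uniform LLN of the
log-likelihood: under condition (A3), the integral
`∫_0^∞ (-log H̄_inf(y)) H̄_{θ₀}(y) v(y) dy` is bounded by
`-log H̄_inf(y*) + (c₂+1)(1 + |log (c₁+1)| / f(y*))`, in particular it is finite. -/
theorem stmt14 (Hbar₀ Hbarinf f v : ℝ → ℝ)
    (hH₀range : ∀ y, 0 ≤ y → Hbar₀ y ∈ Set.Ioc (0:ℝ) 1)
    (hHinfrange : ∀ y, 0 ≤ y → Hbarinf y ∈ Set.Ioc (0:ℝ) 1)
    (hH₀anti : AntitoneOn Hbar₀ (Set.Ici 0))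
    (hHinfanti : AntitoneOn Hbarinf (Set.Ici 0))
    (hfpos : ∀ y, 0 ≤ y → 0 < f y)
    (hfmono : MonotoneOn f (Set.Ici 0))
    (c₁ c₂ : ℝ) (hc₁ : 0 ≤ c₁) (hc₂ : 0 ≤ c₂)
    (ystar : ℝ) (hystar : 0 < ystar)
    (hbound₁ : ∀ y, ystar ≤ y → exp (-f y) / Hbarinf y < c₁ + 1)
    (hbound₂ : ∀ y, ystar ≤ y → 0 < f y * Hbar₀ y ∧ f y * Hbar₀ y < c₂ + 1)
    (hvmeas : Measurable v) (hvnn : ∀ y, 0 ≤ v y)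
    (hvint : ∫⁻ y in Set.Ioi (0:ℝ), ENNReal.ofReal (v y) ≤ 1) :
    ∫⁻ y in Set.Ioi (0:ℝ),
        ENNReal.ofReal ((-log (Hbarinf y)) * Hbar₀ y * v y) ≤
      ENNReal.ofReal
        (-log (Hbarinf ystar) + (c₂ + 1) * (1 + |log (c₁ + 1)| / f ystar)) := by
  set C : ℝ := -log (Hbarinf ystar) + (c₂ + 1) * (1 + |log (c₁ + 1)| / f ystar) with hC
  have hfystar : 0 < f ystar := hfpos ystar hystar.le
  have hHinfstar := hHinfrange ystar hystar.le
  have hlogstar : 0 ≤ -log (Hbarinf ystar) := by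
    have := Real.log_nonpos hHinfstar.1.le hHinfstar.2
    linarith
  have hCnn : 0 ≤ C := by
    have h1 : 0 ≤ |log (c₁ + 1)| / f ystar := by positivity
    rw [hC]; nlinarith
  -- pointwise bound
  have key : ∀ y ∈ Set.Ioi (0:ℝ), (-log (Hbarinf y)) * Hbar₀ y ≤ C := by
    intro y hy
    have hy0 : (0:ℝ) ≤ y := (le_of_lt hy)
    have hHinf := hHinfrange y hy0
    have hH0 := hH₀range y hy0
    have hlognn : 0 ≤ -log (Hbarinf y) := by
      have := Real.log_nonpos hHinf.1.le hHinf.2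
      linarith
    rcases le_total y ystar with hle | hle
    · have hmono : Hbarinf ystar ≤ Hbarinf y :=
        hHinfanti hy0 hystar.le hle
      have hlog : -log (Hbarinf y) ≤ -log (Hbarinf ystar) := by
        have := Real.log_le_log hHinfstar.1 hmono
        linarith
      have h1 : (-log (Hbarinf y)) * Hbar₀ y ≤ -log (Hbarinf ystar) := by
        calc (-log (Hbarinf y)) * Hbar₀ y ≤ (-log (Hbarinf ystar)) * 1 :=
              mul_le_mul hlog hH0.2 hH0.1.le hlogstar
          _ = -log (Hbarinf ystar) := mul_one _
      have h2 : 0 ≤ (c₂ + 1) * (1 + |log (c₁ + 1)| / f ystar) := by positivity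
      rw [hC]; linarith
    · have h1 := hbound₁ y hle
      have h2 := hbound₂ y hle
      have hfy : 0 < f y := hfpos y hy0
      have hfle : f ystar ≤ f y := hfmono hystar.le hy0 hle
      -- from h1: exp (-f y) < (c₁+1) * Hbarinf y
      have h1' : exp (-f y) < (c₁ + 1) * Hbarinf y := by
        rw [div_lt_iff₀ hHinf.1] at h1
        linarith [h1]
      have hlogb : -log (Hbarinf y) ≤ f y + |log (c₁ + 1)| := by
        have hlt : log (exp (-f y)) < log ((c₁ + 1) * Hbarinf y) :=
          Real.log_lt_log (exp_pos _) h1'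
        rw [Real.log_exp, Real.log_mul (by linarith) hHinf.1.ne'] at hlt
        have : log (c₁ + 1) ≤ |log (c₁ + 1)| := le_abs_self _
        linarith
      -- Hbar₀ y ≤ (c₂+1)/f ystar
      have hH0b : Hbar₀ y ≤ (c₂ + 1) / f ystar := by
        have : Hbar₀ y ≤ (c₂ + 1) / f y := by
          rw [le_div_iff₀ hfy]
          nlinarith [h2.2]
        have hdiv : (c₂ + 1) / f y ≤ (c₂ + 1) / f ystar :=
          div_le_div_of_nonneg_left (by linarith) hfystar hfle
        linarith
      have habs : 0 ≤ |log (c₁ + 1)| := abs_nonneg _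
      have step : (-log (Hbarinf y)) * Hbar₀ y ≤
          f y * Hbar₀ y + |log (c₁ + 1)| * ((c₂ + 1) / f ystar) := by
        have := mul_le_mul_of_nonneg_right hlogb hH0.1.le
        nlinarith [mul_le_mul_of_nonneg_left hH0b habs]
      have : (-log (Hbarinf y)) * Hbar₀ y ≤
          (c₂ + 1) + |log (c₁ + 1)| * ((c₂ + 1) / f ystar) := by
        linarith [h2.2, step]
      have heq : (c₂ + 1) + |log (c₁ + 1)| * ((c₂ + 1) / f ystar)
          = (c₂ + 1) * (1 + |log (c₁ + 1)| / f ystar) := by ring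
      rw [hC]; linarith [heq ▸ this, hlogstar]
  calc ∫⁻ y in Set.Ioi (0:ℝ), ENNReal.ofReal ((-log (Hbarinf y)) * Hbar₀ y * v y)
      ≤ ∫⁻ y in Set.Ioi (0:ℝ), ENNReal.ofReal C * ENNReal.ofReal (v y) := by
        apply setLIntegral_mono' measurableSet_Ioi
        intro y hy
        rw [← ENNReal.ofReal_mul hCnn]
        exact ENNReal.ofReal_le_ofReal
          (mul_le_mul_of_nonneg_right (key y hy) (hvnn y))
    _ = ENNReal.ofReal C * ∫⁻ y in Set.Ioi (0:ℝ), ENNReal.ofReal (v y) := by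
        rw [lintegral_const_mul _ (hvmeas.ennreal_ofReal)]
    _ ≤ ENNReal.ofReal C * 1 := mul_le_mul_right hvint _
    _ = ENNReal.ofReal C := mul_one _
end

section
/- Let $(E_k)_{k \ge 1}$ and $(I_k)_{k \ge 1}$ be two sequences of random variables such that the pairs $(E_k, I_k)$ are i.i.d., $\mathrm{E}[I_1] \in (0, \infty)$, $\mathrm{E}[E_1] < \infty$, and $\mathrm{E}[E_1] = \lambda\, \mathrm{E}[I_1]$ for some $\lambda > 0$. Let $C_n$ be positive-integer-valued random variables with $C_n \to \infty$ almost surely. Then the estimator $\hat\lambda_n = \frac{\sum_{k=1}^{C_n} E_k}{\sum_{k=1}^{C_n} I_k}$ converges to $\lambda$ almost surely as $n \to \infty$. -/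
open Topology MeasureTheory ProbabilityTheory Filter Finset

/-- Strong consistency of the idle-period-based arrival rate
estimator: if `(Eₖ, Iₖ)` are i.i.d. pairs with `E[I₁] ∈ (0,∞)`, `E[E₁] < ∞`,
`E[E₁] = λ E[I₁]`, and `Cₙ → ∞` a.s., then
`(∑_{k≤Cₙ} Eₖ) / (∑_{k≤Cₙ} Iₖ) → λ` a.s. -/
theorem stmt16 {Ω : Type*} [MeasurableSpace Ω] (μ : Measure Ω) [IsProbabilityMeasure μ]
    (Z : ℕ → Ω → ℝ × ℝ)
    (hZmeas : ∀ k, Measurable (Z k))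
    (hindep : iIndepFun Z μ)
    (hident : ∀ k, μ.map (Z k) = μ.map (Z 0))
    (hEint : Integrable (fun ω => (Z 0 ω).1) μ)
    (hIint : Integrable (fun ω => (Z 0 ω).2) μ)
    (hInn : ∀ k, ∀ᵐ ω ∂μ, 0 ≤ (Z k ω).2)
    (hIpos : 0 < ∫ ω, (Z 0 ω).2 ∂μ)
    (lam : ℝ) (hlam : 0 < lam)
    (hmean : (∫ ω, (Z 0 ω).1 ∂μ) = lam * ∫ ω, (Z 0 ω).2 ∂μ)
    (C : ℕ → Ω → ℕ) (hCpos : ∀ n ω, 0 < C n ω)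
    (hC : ∀ᵐ ω ∂μ, Tendsto (fun n => C n ω) atTop atTop) :
    ∀ᵐ ω ∂μ, Tendsto
      (fun n => (∑ k ∈ range (C n ω), (Z k ω).1) / ∑ k ∈ range (C n ω), (Z k ω).2)
      atTop (nhds lam) := by
  have hid : ∀ k, IdentDistrib (Z k) (Z 0) μ μ := fun k =>
    ⟨(hZmeas k).aemeasurable, (hZmeas 0).aemeasurable, hident k⟩
  have h1 : ∀ᵐ ω ∂μ, Tendsto (fun n : ℕ => (∑ i ∈ range n, (Z i ω).1) / n) atTop
      (𝓝 (∫ ω, (Z 0 ω).1 ∂μ)) := by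
    apply strong_law_ae_real (fun i ω => (Z i ω).1) hEint
      (fun i j hij => (hindep.indepFun hij).comp measurable_fst measurable_fst)
      (fun i => (hid i).comp measurable_fst)
  have h2 : ∀ᵐ ω ∂μ, Tendsto (fun n : ℕ => (∑ i ∈ range n, (Z i ω).2) / n) atTop
      (𝓝 (∫ ω, (Z 0 ω).2 ∂μ)) := by
    apply strong_law_ae_real (fun i ω => (Z i ω).2) hIint
      (fun i j hij => (hindep.indepFun hij).comp measurable_snd measurable_snd)
      (fun i => (hid i).comp measurable_snd)
  filter_upwards [h1, h2, hC] with ω h1 h2 hC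
  have hdiv : Tendsto (fun n : ℕ => (∑ i ∈ range n, (Z i ω).1) / ∑ i ∈ range n, (Z i ω).2)
      atTop (𝓝 lam) := by
    have := (h1.div h2 hIpos.ne')
    rw [hmean, mul_div_assoc, div_self hIpos.ne', mul_one] at this
    apply this.congr'
    filter_upwards [eventually_gt_atTop 0] with n hn
    have hn' : (n : ℝ) ≠ 0 := Nat.cast_ne_zero.mpr hn.ne'
    simp only [Pi.div_apply]
    by_cases hb : (∑ i ∈ range n, (Z i ω).2) = 0
    · simp [hb]
    · field_simp
  exact hdiv.comp hC
end
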